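/- Let ι : L × [0,1] → Y be a smooth map into a manifold Y with a 1-form α, such that each ι_t : L → Y is an immersion with ι_t*α = 0, and let h = (ι*α)(∂/∂t). If at a point (q, τ) the differential of ι is not injective, then h(q, τ) = 0 and (q, τ) is a critical point of the restriction of h to L × {τ}. -/

import Mathlib

/-- Non-immersed points of Legendrian isotopies (local model, 'only if' direction of
Lemma 2.2): let `ι : L × ℝ → Y` be a smooth map of normed spaces and `α` a smooth
1-form on `Y` such that each slice `ι_t = ι(·,t)`, `t ∈ [0,1]`, is an immersion tangent
to `ker α` (i.e. `ι_t*α = 0`), and set `h = (ι*α)(∂/∂t)`.  If the differential of `ι`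
is not injective at a point `(q, τ)` with `τ ∈ [0,1]`, then `h(q,τ) = 0` and `(q,τ)` is
a critical point of the restriction of `h` to the slice `L × {τ}`. -/
theorem non_immersed_point_is_critical
    {L Y : Type*} [NormedAddCommGroup L] [NormedSpace ℝ L]
    [NormedAddCommGroup Y] [NormedSpace ℝ Y]
    (ι : L × ℝ → Y) (hι : ContDiff ℝ (⊤ : ℕ∞) ι)
    (α : Y → (Y →L[ℝ] ℝ)) (hα : ContDiff ℝ (⊤ : ℕ∞) α)
    (himm : ∀ (q : L) (t : ℝ), t ∈ Set.Icc (0 : ℝ) 1 →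
      Function.Injective fun v : L => fderiv ℝ ι (q, t) (v, 0))
    (htang : ∀ (q : L) (t : ℝ), t ∈ Set.Icc (0 : ℝ) 1 →
      ∀ v : L, α (ι (q, t)) (fderiv ℝ ι (q, t) (v, 0)) = 0)
    (h : L × ℝ → ℝ)
    (hdef : ∀ (q : L) (t : ℝ), h (q, t) = α (ι (q, t)) (fderiv ℝ ι (q, t) (0, 1)))
    (q : L) (τ : ℝ) (hτ : τ ∈ Set.Icc (0 : ℝ) 1)
    (hnotinj : ¬ Function.Injective (fderiv ℝ ι (q, τ))) :
    h (q, τ) = 0 ∧ fderiv ℝ (fun v : L => h (v, τ)) q = 0 := by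
  have hιdiff : Differentiable ℝ ι := hι.differentiable (by simp)
  have hαdiff : Differentiable ℝ α := hα.differentiable (by simp)
  have hAdiff : Differentiable ℝ (fderiv ℝ ι) :=
    (hι.fderiv_right (m := 1) ((by exact WithTop.coe_le_coe.mpr le_top))).differentiable one_ne_zero
  set p0 : L × ℝ := (q, τ) with hp0
  set A : (L × ℝ) → ((L × ℝ) →L[ℝ] Y) := fderiv ℝ ι with hA
  set B : (L × ℝ) →L[ℝ] ((L × ℝ) →L[ℝ] Y) := fderiv ℝ A p0 with hB
  have hBder : HasFDerivAt A B p0 := (hAdiff p0).hasFDerivAt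
  have hsymm : ∀ v w : L × ℝ, B v w = B w v := fun v w =>
    second_derivative_symmetric (fun y => (hιdiff y).hasFDerivAt) hBder v w
  -- produce w with A p0 (w,0) = A p0 (0,1)
  obtain ⟨w, hw⟩ : ∃ w : L, A p0 (w, 0) = A p0 (0, 1) := by
    obtain ⟨z, hz0, hzne⟩ : ∃ z : L × ℝ, A p0 z = 0 ∧ z ≠ 0 := by
      by_contra hcon
      push_neg at hcon
      apply hnotinj
      intro a b hab
      have : A p0 (a - b) = 0 := by rw [map_sub, hab, sub_self]
      have := hcon _ this
      exact sub_eq_zero.mp (not_not.mp (by simpa using hcon _ ‹A p0 (a - b) = 0›))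
    obtain ⟨v, s⟩ := z
    rcases eq_or_ne s 0 with hs | hs
    · exfalso
      apply hzne
      subst hs
      have : (fun x : L => A p0 (x, 0)) v = (fun x : L => A p0 (x, 0)) 0 := by
        show A p0 (v, 0) = A p0 (0, 0)
        rw [hz0, ← Prod.zero_eq_mk, map_zero]
      have hv0 := himm q τ hτ this
      simp [hv0]
    · refine ⟨(-s⁻¹) • v, ?_⟩
      have hrepr : (((-s⁻¹) • v, (0:ℝ)) : L × ℝ) = (-s⁻¹) • (v, s) + (0, 1) := by
        refine Prod.ext (by simp) ?_
        simp [Prod.smul_snd]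
        field_simp
        norm_num
      rw [hrepr, map_add, map_smul, hz0, smul_zero, zero_add]
  have hmem : p0 ∈ (Set.univ ×ˢ Set.Icc (0:ℝ) 1 : Set (L × ℝ)) := ⟨trivial, hτ⟩
  have huniq : UniqueDiffOn ℝ (Set.univ ×ˢ Set.Icc (0:ℝ) 1 : Set (L × ℝ)) :=
    uniqueDiffOn_univ.prod (uniqueDiffOn_Icc zero_lt_one)
  have hcder : HasFDerivAt (fun p => α (ι p)) ((fderiv ℝ α (ι p0)).comp (A p0)) p0 :=
    ((hαdiff (ι p0)).hasFDerivAt).comp p0 ((hιdiff p0).hasFDerivAt)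
  -- the general derivative computation for fun p => α (ι p) (A p e)
  have hFder : ∀ e : L × ℝ, HasFDerivAt (fun p => α (ι p) (A p e))
      ((α (ι p0)).comp ((A p0).comp (0 : (L × ℝ) →L[ℝ] (L × ℝ)) + B.flip e)
        + ((fderiv ℝ α (ι p0)).comp (A p0)).flip (A p0 e)) p0 := by
    intro e
    have h1 : HasFDerivAt (fun p => A p e)
        ((A p0).comp (0 : (L × ℝ) →L[ℝ] (L × ℝ)) + B.flip e) p0 :=
      hBder.clm_apply (hasFDerivAt_const e p0)
    exact hcder.clm_apply h1
  -- key identity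
  have key : ∀ (u : L) (z : L × ℝ),
      fderiv ℝ α (ι p0) (A p0 z) (A p0 (u, 0)) + α (ι p0) (B z (u, 0)) = 0 := by
    intro u z
    have hzero : ∀ p ∈ (Set.univ ×ˢ Set.Icc (0:ℝ) 1 : Set (L × ℝ)),
        (fun p => α (ι p) (A p (u, 0))) p = 0 := by
      rintro ⟨a, b⟩ ⟨-, hb⟩
      exact htang a b hb u
    have hfd0 : fderiv ℝ (fun p => α (ι p) (A p (u, 0))) p0 = 0 := by
      have h1 : fderivWithin ℝ (fun p => α (ι p) (A p (u, 0)))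
          (Set.univ ×ˢ Set.Icc (0:ℝ) 1) p0 = 0 := by
        rw [fderivWithin_congr hzero (hzero p0 hmem)]
        exact fderivWithin_const_apply 0
      rw [← (hFder (u, 0)).differentiableAt.fderivWithin (huniq p0 hmem), h1]
    have hD := (hFder (u, 0)).fderiv
    rw [hfd0] at hD
    have := DFunLike.congr_fun hD.symm z
    simp only [ContinuousLinearMap.add_apply, ContinuousLinearMap.coe_comp',
      Function.comp_apply, ContinuousLinearMap.flip_apply, ContinuousLinearMap.zero_apply,
      map_zero, zero_add] at this
    linarith
  constructor
  · rw [hdef]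
    show α (ι p0) (A p0 (0, 1)) = 0
    rw [← hw]
    exact htang q τ hτ w
  · -- the slice function
    have hg : (fun v : L => h (v, τ)) = (fun p => α (ι p) (A p (0, 1))) ∘ (fun v : L => (v, τ)) :=
      funext fun v => hdef v τ
    have hj : HasFDerivAt (fun v : L => (v, τ))
        ((ContinuousLinearMap.id ℝ L).prod (0 : L →L[ℝ] ℝ)) q :=
      HasFDerivAt.prodMk (hasFDerivAt_id q) (hasFDerivAt_const τ q)
    have hG := (hFder (0, 1)).comp q hj
    rw [hg, hG.fderiv]
    ext u
    simp only [ContinuousLinearMap.comp_apply, ContinuousLinearMap.prod_apply,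
      ContinuousLinearMap.coe_id', id_eq, ContinuousLinearMap.zero_apply,
      ContinuousLinearMap.add_apply, ContinuousLinearMap.flip_apply, map_zero, zero_add]
    have k1 := key u (0, 1)
    have k2 := key u (w, 0)
    have k3 := key w (u, 0)
    have s1 : B (w, 0) (u, 0) = B (u, 0) (w, 0) := hsymm _ _
    have s2 : B (0, 1) (u, 0) = B (u, 0) (0, 1) := hsymm _ _
    rw [← hw] at k1
    rw [s2] at k1
    rw [s1] at k2
    rw [← hw]
    linarith
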